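/- For every real c > r there exists a constant C = C(F,c) > 0 such that for every nonzero integral ideal 𝔍 ⊆ 𝔬 and every t > 0: ∑_{α ∈ 𝔍^{−1}, α ≠ 0} f_c(t·σ(α)) ≤ C · N(𝔍)^{3c} · t^{−c}. -/

import Mathlib

open NumberField
open scoped ENNReal nonZeroDivisors Classical

/-- `cap c x = min(1, x^{-c})`, with the convention `min(1, 0^{-c}) = 1` (i.e. the value of
`min(1, |x|^{-c})` when the coordinate vanishes). -/
noncomputable def cap (c x : ℝ) : ℝ := if x = 0 then 1 else min 1 (x ^ (-c))

/-- The function `f_c(x⃗) = ∏_{real w} min(1,|x_w|^{-c}) ∏_{complex w} min(1,|x_w|^{-2c})`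
on the mixed space `ℝ^{r₁} × ℂ^{r₂}` of a number field `F`. -/
noncomputable def fcFun (F : Type*) [Field F] [NumberField F] (c : ℝ)
    (x : NumberField.mixedEmbedding.mixedSpace F) : ℝ :=
  (∏ w, cap c |x.1 w|) * ∏ w, cap (2 * c) (‖x.2 w‖)

/-!
Every factor of `f_c` is at most `1`, and `f_c(x) ≤ ‖x‖^{-c}` for the sup norm as soon as `x ≠ 0`.
Since `N(𝔍) ∈ 𝔍`, multiplication by `N(𝔍)` maps `𝔍⁻¹` injectively into `𝔬` and scales `σ` by
`N(𝔍)`, so the sum is at most `N(𝔍)^c t^{-c} ∑_{β ∈ 𝔬} ‖σ(β)‖^{-c}`. The last sum runs over the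
lattice `σ(𝔬)` of rank `r < c`, hence converges; finally `N(𝔍)^c ≤ N(𝔍)^{3c}`.
-/

open NumberField.mixedEmbedding (mixedSpace)

lemma cap_nonneg (c : ℝ) {x : ℝ} (hx : 0 ≤ x) : 0 ≤ cap c x := by
  unfold cap
  split_ifs
  exacts [zero_le_one, le_min zero_le_one (Real.rpow_nonneg hx _)]

lemma cap_le_max_one_rpow {c c' : ℝ} (hcc' : c ≤ c') (x : ℝ) :
    cap c' x ≤ max 1 x ^ (-c) := by
  unfold cap
  split_ifs with h0
  · simp [h0]
  rcases le_total x 1 with h1 | h1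
  · rw [max_eq_left h1, Real.one_rpow]
    exact min_le_left _ _
  · rw [max_eq_right h1]
    exact (min_le_right _ _).trans (Real.rpow_le_rpow_of_exponent_le h1 (by linarith))

lemma pi_norm_le_prod_max_one {ι : Type*} [Fintype ι] {E : ι → Type*}
    [∀ i, SeminormedAddGroup (E i)] (f : ∀ i, E i) : ‖f‖ ≤ ∏ i, max 1 ‖f i‖ := by
  refine (pi_norm_le_iff_of_nonneg (by positivity)).2 fun i => ?_
  calc ‖f i‖ ≤ max 1 ‖f i‖ := le_max_right _ _
    _ = ∏ j ∈ {i}, max 1 ‖f j‖ := by rw [Finset.prod_singleton]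
    _ ≤ ∏ j, max 1 ‖f j‖ :=
      Finset.prod_le_prod_of_subset_of_one_le (Finset.subset_univ _) (fun _ _ => by positivity)
        fun _ _ _ => le_max_left _ _

section

variable {F : Type*} [Field F] [NumberField F]

lemma norm_le_prod_max_one (x : mixedSpace F) :
    ‖x‖ ≤ (∏ w, max 1 |x.1 w|) * ∏ w, max 1 ‖x.2 w‖ := by
  have h₁ : 1 ≤ ∏ w, max 1 |x.1 w| := Finset.one_le_prod fun _ _ => le_max_left _ _
  have h₂ : 1 ≤ ∏ w, max 1 ‖x.2 w‖ := Finset.one_le_prod fun _ _ => le_max_left _ _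
  refine max_le ?_ ?_
  · calc ‖x.1‖ ≤ ∏ w, max 1 ‖x.1 w‖ := pi_norm_le_prod_max_one _
      _ ≤ _ := by simpa only [Real.norm_eq_abs] using le_mul_of_one_le_right (by positivity) h₂
  · exact (pi_norm_le_prod_max_one _).trans (le_mul_of_one_le_left (by positivity) h₁)

lemma fcFun_le_norm_rpow {c : ℝ} (hc : 0 < c) {x : mixedSpace F} (hx : x ≠ 0) :
    fcFun F c x ≤ ‖x‖ ^ (-c) :=
  calc fcFun F c x ≤ (∏ w, max 1 |x.1 w| ^ (-c)) * ∏ w, max 1 ‖x.2 w‖ ^ (-c) := by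
        unfold fcFun
        refine mul_le_mul ?_ ?_ (Finset.prod_nonneg fun _ _ => cap_nonneg _ (norm_nonneg _))
          (Finset.prod_nonneg fun _ _ => by positivity)
        · exact Finset.prod_le_prod (fun _ _ => cap_nonneg _ (abs_nonneg _))
            fun _ _ => cap_le_max_one_rpow le_rfl _
        · exact Finset.prod_le_prod (fun _ _ => cap_nonneg _ (norm_nonneg _))
            fun _ _ => cap_le_max_one_rpow (by linarith) _
    _ = ((∏ w, max 1 |x.1 w|) * ∏ w, max 1 ‖x.2 w‖) ^ (-c) := by
        rw [Real.mul_rpow (by positivity) (by positivity),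
          Real.finsetProd_rpow _ _ (fun _ _ => by positivity),
          Real.finsetProd_rpow _ _ (fun _ _ => by positivity)]
    _ ≤ ‖x‖ ^ (-c) :=
        Real.rpow_le_rpow_of_nonpos (norm_pos_iff.2 hx) (norm_le_prod_max_one x) (by linarith)

lemma summable_norm_mixedEmbedding_rpow {c : ℝ} (hc : (Module.finrank ℚ F : ℝ) < c) :
    Summable fun a : 𝓞 F => ‖mixedEmbedding F a‖ ^ (-c) := by
  have hrank : Module.finrank ℤ (mixedEmbedding.integerLattice F) = Module.finrank ℚ F := by
    rw [ZLattice.rank ℝ, mixedEmbedding.finrank]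
  have hL := ZLattice.summable_norm_rpow (L := mixedEmbedding.integerLattice F) (-c)
    (by rw [hrank]; linarith)
  let ι : 𝓞 F → mixedEmbedding.integerLattice F := fun a =>
    ⟨_, LinearMap.mem_range_self
      ((mixedEmbedding F).comp (algebraMap (𝓞 F) F)).toIntAlgHom.toLinearMap a⟩
  exact hL.comp_injective (i := ι) fun a b h =>
    RingOfIntegers.coe_injective (mixedEmbedding_injective F (congrArg Subtype.val h))

lemma fcFun_smul_le {c : ℝ} (hc : 0 < c) {t N : ℝ} (ht : 0 < t) (hN : 0 < N)
    {x : mixedSpace F} (hx : x ≠ 0) :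
    fcFun F c (t • x) ≤ N ^ c * t ^ (-c) * ‖N • x‖ ^ (-c) := by
  refine (fcFun_le_norm_rpow hc (smul_ne_zero ht.ne' hx)).trans_eq ?_
  have : N ^ c ≠ 0 := (Real.rpow_pos_of_pos hN c).ne'
  rw [norm_smul, norm_smul, Real.norm_of_nonneg ht.le, Real.norm_of_nonneg hN.le,
    Real.mul_rpow ht.le (norm_nonneg _), Real.mul_rpow hN.le (norm_nonneg _), Real.rpow_neg hN.le]
  field_simp

lemma exists_coe_eq_absNorm_mul {J : Ideal (𝓞 F)} (hJ : J ≠ ⊥) {α : F}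
    (hα : α ∈ (J : FractionalIdeal (𝓞 F)⁰ F)⁻¹) : ∃ a : 𝓞 F, (a : F) = Ideal.absNorm J * α := by
  have hNJ : (Ideal.absNorm J : F) ∈ (J : FractionalIdeal (𝓞 F)⁰ F) :=
    (FractionalIdeal.mem_coeIdeal _).2 ⟨_, Ideal.absNorm_mem J, map_natCast _ _⟩
  obtain ⟨a, ha⟩ := (FractionalIdeal.mem_one_iff _).1 <|
    (FractionalIdeal.mem_inv_iff (FractionalIdeal.coeIdeal_ne_zero.2 hJ)).1 hα _ hNJ
  exact ⟨a, ha.trans (mul_comm _ _)⟩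

lemma tsum_fcFun_smul_le {c : ℝ} (hc : 0 < c) {J : Ideal (𝓞 F)} (hJ : J ≠ ⊥) {t : ℝ}
    (ht : 0 < t) :
    ∑' α : {x : F // x ∈ ((J : FractionalIdeal (𝓞 F)⁰ F))⁻¹ ∧ x ≠ 0},
        ENNReal.ofReal (fcFun F c (t • mixedEmbedding F (α : F)))
      ≤ ENNReal.ofReal ((Ideal.absNorm J : ℝ) ^ c * t ^ (-c)) *
        ∑' a : 𝓞 F, ENNReal.ofReal (‖mixedEmbedding F a‖ ^ (-c)) := by
  set N : ℕ := Ideal.absNorm J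
  have hN : N ≠ 0 := Ideal.absNorm_eq_zero_iff.not.2 hJ
  choose a ha using fun α : {x : F // x ∈ ((J : FractionalIdeal (𝓞 F)⁰ F))⁻¹ ∧ x ≠ 0} =>
    exists_coe_eq_absNorm_mul hJ α.2.1
  have ha_inj : Function.Injective a := fun α β h =>
    Subtype.ext (mul_left_cancel₀ (Nat.cast_ne_zero.2 hN) (by rw [← ha, ← ha, h]))
  have hterm : ∀ α, ENNReal.ofReal (fcFun F c (t • mixedEmbedding F (α.1 : F)))
      ≤ ENNReal.ofReal ((N : ℝ) ^ c * t ^ (-c)) *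
        ENNReal.ofReal (‖mixedEmbedding F (a α)‖ ^ (-c)) := fun α => by
    have hα : mixedEmbedding F α.1 ≠ 0 := (map_ne_zero (mixedEmbedding F)).2 α.2.2
    have hσa : mixedEmbedding F (a α) = (N : ℝ) • mixedEmbedding F α.1 := by
      rw [ha, ← nsmul_eq_mul, map_nsmul, Nat.cast_smul_eq_nsmul]
    rw [← ENNReal.ofReal_mul (by positivity), hσa]
    exact ENNReal.ofReal_le_ofReal (fcFun_smul_le hc ht (by positivity) hα)
  calc _ ≤ ∑' α, ENNReal.ofReal ((N : ℝ) ^ c * t ^ (-c)) *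
          ENNReal.ofReal (‖mixedEmbedding F (a α)‖ ^ (-c)) := ENNReal.tsum_le_tsum hterm
    _ = ENNReal.ofReal ((N : ℝ) ^ c * t ^ (-c)) *
          ∑' α, ENNReal.ofReal (‖mixedEmbedding F (a α)‖ ^ (-c)) := ENNReal.tsum_mul_left
    _ ≤ _ := by
      gcongr
      exact ENNReal.tsum_comp_le_tsum_of_injective ha_inj _

end

/-- For `c > r = [F:ℚ]` there is `C = C(F,c) > 0` such that for every nonzero integral ideal
`𝔍` and every `t > 0`, `∑_{0 ≠ α ∈ 𝔍⁻¹} f_c(t σ(α)) ≤ C N(𝔍)^{3c} t^{-c}`. -/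
theorem stmt_18 (F : Type*) [Field F] [NumberField F] (c : ℝ)
    (hc : (Module.finrank ℚ F : ℝ) < c) :
    ∃ C : ℝ, 0 < C ∧
      ∀ J : Ideal (𝓞 F), J ≠ ⊥ → ∀ t : ℝ, 0 < t →
        (∑' α : {x : F // x ∈ ((J : FractionalIdeal (𝓞 F)⁰ F))⁻¹ ∧ x ≠ 0},
            ENNReal.ofReal (fcFun F c (t • NumberField.mixedEmbedding F (α : F))))
          ≤ ENNReal.ofReal (C * (Ideal.absNorm J : ℝ) ^ (3 * c) * t ^ (-c)) := by
  have hc₀ : 0 < c := lt_of_le_of_lt (Nat.cast_nonneg _) hc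
  set Z := ∑' a : 𝓞 F, ENNReal.ofReal (‖mixedEmbedding F a‖ ^ (-c)) with hZ_def
  have hZ : Z ≠ ⊤ := by
    rw [hZ_def, ← ENNReal.ofReal_tsum_of_nonneg (fun _ => by positivity)
      (summable_norm_mixedEmbedding_rpow hc)]
    exact ENNReal.ofReal_ne_top
  refine ⟨Z.toReal + 1, by positivity, fun J hJ t ht => (tsum_fcFun_smul_le hc₀ hJ ht).trans ?_⟩
  have hN : (1 : ℝ) ≤ Ideal.absNorm J :=
    Nat.one_le_cast.2 (Nat.one_le_iff_ne_zero.2 (Ideal.absNorm_eq_zero_iff.not.2 hJ))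
  calc _ ≤ ENNReal.ofReal ((Ideal.absNorm J : ℝ) ^ c * t ^ (-c)) *
          ENNReal.ofReal (Z.toReal + 1) := by
        gcongr
        exact (ENNReal.le_ofReal_iff_toReal_le hZ (by positivity)).2 (by linarith)
    _ = ENNReal.ofReal ((Z.toReal + 1) * (Ideal.absNorm J : ℝ) ^ c * t ^ (-c)) := by
        rw [← ENNReal.ofReal_mul (by positivity), mul_comm, mul_assoc]
    _ ≤ _ := by
        gcongr
        linarith
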